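/- arXiv:2209.01143 — 2 statements merged into one kernel-verified Lean document; each statement's English description precedes it below -/
import Mathlib

section
/- Let E be a real inner product space, let r_t : E → ℝ (for integers t, with r_s ≡ 0 for s ≤ 0) be differentiable functions, let w ≥ 1, T ≥ 1 be integers and δ ≥ 0, and let m(·; t) : E → E for t ∈ {1,…,T} be arbitrary gradient generators. Define u_{w,t}(θ) = (1/w) · Σ_{i=0}^{w-1} r_{t-i}(θ) and the smoothed generator m̄(θ; t) = (1/w) · (m(θ; t) + Σ_{i=1}^{w-1} ∇r_{t-i}(θ)). Suppose θ_1,…,θ_T ∈ E satisfy the termination condition ‖m̄(θ_t; t)‖ ≤ δ for every t ∈ {1,…,T}, and suppose Q_1,…,Q_T ≥ 0 satisfy ‖∇r_t(θ) − m(θ; t)‖² ≤ Q_t for all θ ∈ E and t ∈ {1,…,T}. Then (1/T) · Σ_{t=1}^T ‖∇u_{w,t}(θ_t)‖² ≤ 2δ² + (2/w²) · (1/T) · Σ_{t=1}^T Q_t. -/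
/-!
The gradient of the smoothed loss splits as `∇u_{w,t} = m̄(·; t) + (1/w)(∇r_t − m(·; t))`: the
smoothed generator differs from `∇u_{w,t}` only in that the newest gradient `∇r_t` is replaced
by its forecast. Bounding `‖a + b‖² ≤ 2‖a‖² + 2‖b‖²` at each iterate with the termination
condition and the forecast error, and averaging over `t`, gives the regret bound.
-/

open Finset

open scoped BigOperators Gradient

section Gradient

variable {F : Type*} [NormedAddCommGroup F] [InnerProductSpace ℝ F] [CompleteSpace F]

theorem gradient_fun_sum {ι : Type*} (s : Finset ι) {f : ι → F → ℝ} {x : F}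
    (hf : ∀ i ∈ s, DifferentiableAt ℝ (f i) x) :
    ∇ (fun y => ∑ i ∈ s, f i y) x = ∑ i ∈ s, ∇ (f i) x := by
  simp only [gradient, fderiv_fun_sum hf, map_sum]

theorem gradient_fun_const_mul {f : F → ℝ} {x : F} (hf : DifferentiableAt ℝ f x) (c : ℝ) :
    ∇ (fun y => c * f y) x = c • ∇ f x := by
  simp only [gradient, fderiv_const_mul hf, map_smul]

end Gradient

theorem range_eq_insert_zero_Icc {w : ℕ} (hw : 1 ≤ w) : range w = insert 0 (Icc 1 (w - 1)) := by
  ext i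
  simp only [mem_range, mem_insert, mem_Icc]
  omega

noncomputable def smoothedLoss {E : Type*} (r : ℤ → E → ℝ) (w : ℕ) (t : ℤ) (θ : E) : ℝ :=
  (1 / (w : ℝ)) * ∑ i ∈ range w, r (t - i) θ

section SmoothedLoss

variable {E : Type*} [NormedAddCommGroup E] [InnerProductSpace ℝ E] [CompleteSpace E]

noncomputable def smoothedGenerator (r : ℤ → E → ℝ) (m : ℤ → E → E) (w : ℕ) (t : ℤ) (θ : E) :
    E :=
  (1 / (w : ℝ)) • (m t θ + ∑ i ∈ Icc 1 (w - 1), ∇ (r (t - i)) θ)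

variable {r : ℤ → E → ℝ} {w : ℕ} {θ : E}

theorem gradient_smoothedLoss (hr : ∀ s, DifferentiableAt ℝ (r s) θ) (t : ℤ) :
    ∇ (smoothedLoss r w t) θ = (1 / (w : ℝ)) • ∑ i ∈ range w, ∇ (r (t - i)) θ := by
  rw [← gradient_fun_sum _ fun i _ => hr _]
  exact gradient_fun_const_mul (DifferentiableAt.fun_sum fun i _ => hr _) _

theorem gradient_smoothedLoss_eq_smoothedGenerator_add (m : ℤ → E → E)
    (hr : ∀ s, DifferentiableAt ℝ (r s) θ) (hw : 1 ≤ w) (t : ℤ) :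
    ∇ (smoothedLoss r w t) θ
      = smoothedGenerator r m w t θ + (1 / (w : ℝ)) • (∇ (r t) θ - m t θ) := by
  rw [gradient_smoothedLoss hr, smoothedGenerator, range_eq_insert_zero_Icc hw,
    sum_insert (by simp)]
  push_cast
  rw [sub_zero]
  module

end SmoothedLoss

theorem norm_add_smul_sq_le {E : Type*} [SeminormedAddCommGroup E] [NormedSpace ℝ E]
    {a e : E} {c δ Q : ℝ} (ha : ‖a‖ ≤ δ) (he : ‖e‖ ^ 2 ≤ Q) :
    ‖a + c • e‖ ^ 2 ≤ 2 * δ ^ 2 + 2 * c ^ 2 * Q :=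
  calc ‖a + c • e‖ ^ 2 ≤ (‖a‖ + ‖c • e‖) ^ 2 := by gcongr; exact norm_add_le _ _
    _ ≤ 2 * (‖a‖ ^ 2 + ‖c • e‖ ^ 2) := add_sq_le
    _ = 2 * ‖a‖ ^ 2 + 2 * c ^ 2 * ‖e‖ ^ 2 := by
      rw [norm_smul, mul_pow, Real.norm_eq_abs, sq_abs]; ring
    _ ≤ 2 * δ ^ 2 + 2 * c ^ 2 * Q := by gcongr

theorem one_div_card_mul_sum_le_add_mul {ι : Type*} {s : Finset ι} (hs : s.Nonempty)
    {f g : ι → ℝ} {c k : ℝ} (h : ∀ i ∈ s, f i ≤ c + k * g i) :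
    1 / (#s : ℝ) * ∑ i ∈ s, f i ≤ c + k * (1 / (#s : ℝ) * ∑ i ∈ s, g i) := by
  simp only [one_div_mul_eq_div, ← expect_eq_sum_div_card]
  calc 𝔼 i ∈ s, f i ≤ 𝔼 i ∈ s, (c + k * g i) := expect_le_expect h
    _ = c + k * 𝔼 i ∈ s, g i := by rw [expect_add_distrib, expect_const hs, mul_expect]

theorem meta_gradient_descent_regret_general
    {E : Type*} [NormedAddCommGroup E] [InnerProductSpace ℝ E] [CompleteSpace E]
    (r : ℤ → E → ℝ) (hrdiff : ∀ t : ℤ, Differentiable ℝ (r t))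
    (w T : ℕ) (hw : 1 ≤ w) (hT : 1 ≤ T)
    (δ : ℝ)
    (m : ℤ → E → E)
    (u : ℤ → E → ℝ)
    (hu : ∀ (t : ℤ) (θ : E),
      u t θ = (1 / (w : ℝ)) * ∑ i ∈ Finset.range w, r (t - i) θ)
    (mbar : ℤ → E → E)
    (hmbar : ∀ (t : ℤ) (θ : E),
      mbar t θ = (1 / (w : ℝ)) •
        (m t θ + ∑ i ∈ Finset.Icc 1 (w - 1), gradient (r (t - i)) θ))
    (θ : ℤ → E)
    (hterm : ∀ t ∈ Finset.Icc (1 : ℤ) (T : ℤ), ‖mbar t (θ t)‖ ≤ δ)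
    (Q : ℤ → ℝ)
    (hQ : ∀ t ∈ Finset.Icc (1 : ℤ) (T : ℤ), ∀ x : E,
      ‖gradient (r t) x - m t x‖ ^ 2 ≤ Q t) :
    (1 / (T : ℝ)) * ∑ t ∈ Finset.Icc (1 : ℤ) (T : ℤ), ‖gradient (u t) (θ t)‖ ^ 2
      ≤ 2 * δ ^ 2
        + (2 / (w : ℝ) ^ 2) *
            ((1 / (T : ℝ)) * ∑ t ∈ Finset.Icc (1 : ℤ) (T : ℤ), Q t) := by
  obtain rfl : u = smoothedLoss r w := funext fun t => funext (hu t)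
  obtain rfl : mbar = smoothedGenerator r m w := funext fun t => funext (hmbar t)
  have hcard : ((#(Icc (1 : ℤ) T) : ℕ) : ℝ) = T := by simp
  rw [← hcard]
  refine one_div_card_mul_sum_le_add_mul (nonempty_Icc.2 (by exact_mod_cast hT)) fun t ht => ?_
  rw [gradient_smoothedLoss_eq_smoothedGenerator_add m (fun s => hrdiff s _) hw]
  calc _ ≤ 2 * δ ^ 2 + 2 * (1 / (w : ℝ)) ^ 2 * Q t :=
        norm_add_smul_sq_le (hterm t ht) (hQ t ht _)
    _ = 2 * δ ^ 2 + 2 / (w : ℝ) ^ 2 * Q t := by ring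

/-- **Theorem 1** (regret of Meta Gradient Descent): if the iterates satisfy the
termination condition `‖m̄(θ_t; t)‖ ≤ δ` and the forecast error of the gradient
generator is bounded by `Q t`, then the average `w`-local regret is at most
`2δ² + (2/w²)·(1/T)·∑ Q t`. -/
theorem meta_gradient_descent_regret
    {E : Type*} [NormedAddCommGroup E] [InnerProductSpace ℝ E] [CompleteSpace E]
    (r : ℤ → E → ℝ) (hrdiff : ∀ t : ℤ, Differentiable ℝ (r t))
    (hr0 : ∀ s : ℤ, s ≤ 0 → r s = 0)
    (w T : ℕ) (hw : 1 ≤ w) (hT : 1 ≤ T)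
    (δ : ℝ) (hδ : 0 ≤ δ)
    (m : ℤ → E → E)
    (u : ℤ → E → ℝ)
    (hu : ∀ (t : ℤ) (θ : E),
      u t θ = (1 / (w : ℝ)) * ∑ i ∈ Finset.range w, r (t - i) θ)
    (mbar : ℤ → E → E)
    (hmbar : ∀ (t : ℤ) (θ : E),
      mbar t θ = (1 / (w : ℝ)) •
        (m t θ + ∑ i ∈ Finset.Icc 1 (w - 1), gradient (r (t - i)) θ))
    (θ : ℤ → E)
    (hterm : ∀ t ∈ Finset.Icc (1 : ℤ) (T : ℤ), ‖mbar t (θ t)‖ ≤ δ)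
    (Q : ℤ → ℝ)
    (hQnonneg : ∀ t ∈ Finset.Icc (1 : ℤ) (T : ℤ), 0 ≤ Q t)
    (hQ : ∀ t ∈ Finset.Icc (1 : ℤ) (T : ℤ), ∀ x : E,
      ‖gradient (r t) x - m t x‖ ^ 2 ≤ Q t) :
    (1 / (T : ℝ)) * ∑ t ∈ Finset.Icc (1 : ℤ) (T : ℤ), ‖gradient (u t) (θ t)‖ ^ 2
      ≤ 2 * δ ^ 2
        + (2 / (w : ℝ) ^ 2) *
            ((1 / (T : ℝ)) * ∑ t ∈ Finset.Icc (1 : ℤ) (T : ℤ), Q t) :=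
  meta_gradient_descent_regret_general r hrdiff w T hw hT δ m u hu mbar hmbar θ hterm Q hQ
end

section
/- Let E be a real inner product space, let r_t : E → ℝ (for integers t, with r_s ≡ 0 for s ≤ 0) be differentiable functions with ‖∇r_t(θ)‖ ≤ M for all θ ∈ E and all t, where M > 0. Let b ≥ 2, w ≥ 1, T ≥ 1 be integers, δ ≥ 0, c > 0, and set η = c·√(log b / (T·M⁴)). For a ∈ S_b define the linear gradient generator m(θ; a, t) = Σ_{i=1}^b a_i ∇r_{t−i}(θ) and its smoothed version m̄(θ; a, t) = (1/w)·(m(θ; a, t) + Σ_{i=1}^{w-1} ∇r_{t-i}(θ)), and define u_{w,t}(θ) = (1/w)·Σ_{i=0}^{w-1} r_{t-i}(θ). Suppose the mixture weights φ_1,…,φ_T are produced by exponentiated gradient: φ_1 = (1/b,…,1/b) and φ_{t+1,i} = φ_{t,i}·exp(−η (∇h_t(φ_t))_i)/(Σ_j φ_{t,j}·exp(−η (∇h_t(φ_t))_j)), where h_t(a) = ‖Σ_{j=1}^b a_j (∇r_t(θ_t) − ∇r_{t−j}(θ_t))‖², and suppose the iterates θ_1,…,θ_T ∈ E satisfy the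 termination condition ‖m̄(θ_t; φ_t, t)‖ ≤ δ for all t ∈ {1,…,T}. Furthermore suppose for some φ* ∈ S_b and reals Q_1,…,Q_T ≥ 0 one has ‖∇r_t(θ) − m(θ; φ*, t)‖² ≤ Q_t for all θ ∈ E and t ∈ {1,…,T}. Then the average w-local regret satisfies (1/T)·Σ_{t=1}^T ‖∇u_{w,t}(θ_t)‖² ≤ 2δ² + (2/(w²T))·(Σ_{t=1}^T Q_t + (1/c + 32c)·M²·√(T·log b)). -/
/-!
Write `∇u_t(θ_t) = m̄(θ_t; φ_t, t) + (1/w)(∇r_t(θ_t) − m(θ_t; φ_t, t))`: the first term has norm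
at most `δ` by the termination test, and the square of the second is `h_t(φ_t) / w²`. The forecast
error `h_t` is the squared norm of a linear function of the mixture weights, hence convex, so
`h_t(φ_t) − h_t(φ*) ≤ ⟪∇h_t(φ_t), φ_t − φ*⟫`, and the sum of the right-hand sides is the regret of
exponentiated gradient on the linear losses `∇h_t(φ_t)`, whose coordinates lie in `[−8M², 8M²]`.
Bounding each normalizer of the exponential weights by Hoeffding's lemma gives the Hedge bound
`log b / η + Tη(16M²)²/8`, which equals `(1/c + 32c) M² √(T log b)` for the given `η`.
-/

open Real Finset MeasureTheory ProbabilityTheory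
open scoped InnerProductSpace

theorem sum_mul_exp_mul_le_of_mem_Icc {ι : Type*} [Fintype ι] {p ℓ : ι → ℝ}
    (hp : p ∈ stdSimplex ℝ ι) {A B : ℝ} (hℓ : ∀ i, ℓ i ∈ Set.Icc A B) (s : ℝ) :
    ∑ i, p i * exp (s * ℓ i) ≤ exp (s * ∑ i, p i * ℓ i + s ^ 2 * (B - A) ^ 2 / 8) := by
  let _ : MeasurableSpace ι := ⊤
  let μ : Measure ι := ∑ i, ENNReal.ofReal (p i) • Measure.dirac i
  have hμ (f : ι → ℝ) : ∫ x, f x ∂μ = ∑ i, p i * f i := by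
    rw [integral_finsetSum_measure fun i _ ↦ Integrable.of_finite.smul_measure (by simp)]
    simp [integral_smul_measure, ENNReal.toReal_ofReal (hp.1 _)]
  have : IsProbabilityMeasure μ := ⟨by
    simp [μ, ← ENNReal.ofReal_sum_of_nonneg fun i _ ↦ hp.1 i, hp.2]⟩
  -- `p` as a probability measure on `ι`, so that Mathlib's Hoeffding lemma applies
  have hmgf := (hasSubgaussianMGF_of_mem_Icc (μ := μ) (measurable_of_finite ℓ).aemeasurable
    (ae_of_all _ hℓ)).mgf_le s
  have hc : (((‖B - A‖₊ / 2) ^ 2 : NNReal) : ℝ) = (B - A) ^ 2 / 4 := by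
    push_cast [coe_nnnorm, Real.norm_eq_abs]; rw [div_pow, sq_abs]; ring
  rw [mgf, hμ, hμ, hc] at hmgf
  set m := ∑ i, p i * ℓ i
  calc ∑ i, p i * exp (s * ℓ i) = exp (s * m) * ∑ i, p i * exp (s * (ℓ i - m)) := by
        rw [mul_sum]
        refine sum_congr rfl fun i _ ↦ ?_
        rw [mul_left_comm, ← exp_add]; ring_nf
    _ ≤ exp (s * m) * exp ((B - A) ^ 2 / 4 * s ^ 2 / 2) := by gcongr
    _ = _ := by rw [← exp_add]; ring_nf

section ExponentialWeights

variable {ι : Type*} [Fintype ι]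

theorem sum_mul_pos_of_mem_stdSimplex {x g : ι → ℝ} (hx : x ∈ stdSimplex ℝ ι)
    (hg : ∀ i, 0 < g i) : 0 < ∑ i, x i * g i := by
  obtain ⟨i, -, hi⟩ := exists_lt_of_sum_lt (s := univ) (f := 0) (g := x) (by simp [hx.2])
  exact sum_pos' (fun j _ ↦ mul_nonneg (hx.1 j) (hg j).le) ⟨i, mem_univ i, mul_pos hi (hg i)⟩

theorem normalize_mul_mem_stdSimplex {x g : ι → ℝ} (hx : x ∈ stdSimplex ℝ ι)
    (hg : ∀ i, 0 < g i) : (fun i ↦ x i * g i / ∑ j, x j * g j) ∈ stdSimplex ℝ ι := by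
  have hZ := sum_mul_pos_of_mem_stdSimplex hx hg
  exact ⟨fun i ↦ div_nonneg (mul_nonneg (hx.1 i) (hg i).le) hZ.le,
    by rw [← sum_div, div_self hZ.ne']⟩

def IsExpWeights (η : ℝ) (ℓ : ℕ → ι → ℝ) (T : ℕ) (φ : ℕ → ι → ℝ) : Prop :=
  ∀ t ∈ Icc 1 T, ∀ i,
    φ (t + 1) i = φ t i * exp (-η * ℓ t i) / ∑ j, φ t j * exp (-η * ℓ t j)

variable {η : ℝ} {ℓ : ℕ → ι → ℝ} {T : ℕ} {φ : ℕ → ι → ℝ}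

theorem IsExpWeights.mem_stdSimplex (hφ : IsExpWeights η ℓ T φ) (h1 : φ 1 ∈ stdSimplex ℝ ι) :
    ∀ t ∈ Icc 1 (T + 1), φ t ∈ stdSimplex ℝ ι := by
  suffices ∀ n ≤ T, φ (n + 1) ∈ stdSimplex ℝ ι by
    intro t ht
    obtain ⟨n, rfl⟩ : ∃ n, t = n + 1 := ⟨t - 1, by grind⟩
    exact this n (by grind)
  intro n hn
  induction n with
  | zero => exact h1
  | succ n ih =>
    have hstep : φ (n + 1 + 1) = _ := funext (hφ (n + 1) (by grind))
    rw [hstep]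
    exact normalize_mul_mem_stdSimplex (ih (by omega)) fun i ↦ exp_pos _

theorem IsExpWeights.mul_prod_normalizer (hφ : IsExpWeights η ℓ T φ)
    (hmem : ∀ t ∈ Icc 1 T, φ t ∈ stdSimplex ℝ ι) {n : ℕ} (hn : n ≤ T) (i : ι) :
    φ (n + 1) i * ∏ t ∈ Icc 1 n, ∑ j, φ t j * exp (-η * ℓ t j)
      = φ 1 i * exp (-η * ∑ t ∈ Icc 1 n, ℓ t i) := by
  induction n with
  | zero => simp
  | succ n ih =>
    have ht : n + 1 ∈ Icc 1 T := by grind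
    have hZ := sum_mul_pos_of_mem_stdSimplex (hmem _ ht) fun j ↦ exp_pos (-η * ℓ (n + 1) j)
    rw [prod_Icc_succ_top (by omega), sum_Icc_succ_top (by omega), hφ _ ht,
      mul_add, exp_add, ← mul_assoc (φ 1 i), ← ih (by omega)]
    rw [div_mul_eq_mul_div, mul_div_assoc, mul_div_cancel_right₀ _ hZ.ne']
    ring

theorem IsExpWeights.regret_le [Nonempty ι] (hφ : IsExpWeights η ℓ T φ) (hη : 0 < η)
    (hinit : ∀ i, φ 1 i = (Fintype.card ι : ℝ)⁻¹) {A B : ℝ}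
    (hℓ : ∀ t ∈ Icc 1 T, ∀ i, ℓ t i ∈ Set.Icc A B) {p : ι → ℝ} (hp : p ∈ stdSimplex ℝ ι) :
    ∑ t ∈ Icc 1 T, ∑ i, (φ t i - p i) * ℓ t i
      ≤ log (Fintype.card ι) / η + T * (η * (B - A) ^ 2 / 8) := by
  set Z : ℕ → ℝ := fun t ↦ ∑ j, φ t j * exp (-η * ℓ t j)
  set n : ℝ := (Fintype.card ι : ℝ)
  have hn : 0 < n := Nat.cast_pos.2 Fintype.card_pos
  have hmem' : ∀ t ∈ Icc 1 (T + 1), φ t ∈ stdSimplex ℝ ι := by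
    refine hφ.mem_stdSimplex ?_
    rw [show φ 1 = _ from funext hinit]
    exact (stdSimplex.barycenter (𝕜 := ℝ)).2
  have hmem : ∀ t ∈ Icc 1 T, φ t ∈ stdSimplex ℝ ι := fun t ht ↦ hmem' t (by grind)
  have hZ : ∀ t ∈ Icc 1 T, 0 < Z t :=
    fun t ht ↦ sum_mul_pos_of_mem_stdSimplex (hmem t ht) fun j ↦ exp_pos _
  have hupper : ∑ t ∈ Icc 1 T, log (Z t)
      ≤ ∑ t ∈ Icc 1 T, (-η * ∑ i, φ t i * ℓ t i + η ^ 2 * (B - A) ^ 2 / 8) := by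
    refine sum_le_sum fun t ht ↦ (log_le_iff_le_exp (hZ t ht)).2 ?_
    simpa [Z] using sum_mul_exp_mul_le_of_mem_Icc (hmem t ht) (hℓ t ht) (-η)
  have hlower (i : ι) : -log n - η * ∑ t ∈ Icc 1 T, ℓ t i ≤ ∑ t ∈ Icc 1 T, log (Z t) := by
    rw [← log_prod fun t ht ↦ (hZ t ht).ne', le_log_iff_exp_le (prod_pos hZ)]
    calc exp (-log n - η * ∑ t ∈ Icc 1 T, ℓ t i)
        = φ (T + 1) i * ∏ t ∈ Icc 1 T, Z t := by
          rw [hφ.mul_prod_normalizer hmem le_rfl, hinit, sub_eq_add_neg, exp_add, exp_neg,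
            exp_log hn, neg_mul]
      _ ≤ ∏ t ∈ Icc 1 T, Z t := mul_le_of_le_one_left (prod_pos hZ).le
          (mem_Icc_of_mem_stdSimplex (hmem' _ (by simp)) i).2
  have haverage : -log n - η * ∑ t ∈ Icc 1 T, ∑ i, p i * ℓ t i ≤ ∑ t ∈ Icc 1 T, log (Z t) := by
    refine (le_of_eq ?_).trans <| Set.mem_Iic.1 <|
      (convex_Iic _).sum_mem (fun i _ ↦ hp.1 i) hp.2 fun i _ ↦ Set.mem_Iic.2 (hlower i)
    simp only [smul_eq_mul, mul_sub, sum_sub_distrib, ← sum_mul, hp.2, mul_sum]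
    rw [sum_comm]
    ring_nf
  simp only [sum_add_distrib, sum_const, Nat.card_Icc, ← mul_sum, nsmul_eq_mul] at hupper
  rw [div_add' _ _ _ hη.ne', le_div_iff₀ hη]
  simp only [sub_mul, sum_sub_distrib]
  push_cast at hupper
  linarith

end ExponentialWeights

section LinearCombination

variable {E : Type*} [NormedAddCommGroup E] [InnerProductSpace ℝ E] {ι : Type*} [Fintype ι]

theorem fderiv_norm_sq_sum_smul_apply_single [DecidableEq ι] (v : ι → E) (a : ι → ℝ) (i : ι) :
    fderiv ℝ (fun a : ι → ℝ ↦ ‖∑ j, a j • v j‖ ^ 2) a (Pi.single i 1)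
      = 2 * ⟪∑ j, a j • v j, v i⟫_ℝ := by
  have hsum := HasFDerivAt.fun_sum (u := univ) fun j _ ↦
    (hasFDerivAt_apply (𝕜 := ℝ) j a).smul_const (v j)
  rw [hsum.norm_sq.fderiv]
  simp [Pi.single_apply, sum_inner, real_inner_smul_left]

theorem norm_sq_sum_smul_sub_norm_sq_sum_smul_le (v : ι → E) (a p : ι → ℝ) :
    ‖∑ j, a j • v j‖ ^ 2 - ‖∑ j, p j • v j‖ ^ 2
      ≤ ∑ j, (a j - p j) * (2 * ⟪∑ k, a k • v k, v j⟫_ℝ) := by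
  set x := ∑ k, a k • v k
  have hgrad : ∑ j, (a j - p j) * (2 * ⟪x, v j⟫_ℝ) = 2 * ⟪x, x - ∑ j, p j • v j⟫_ℝ := by
    simp only [x, ← sum_sub_distrib, ← sub_smul, inner_sum, real_inner_smul_right, mul_sum]
    ring_nf
  rw [hgrad, inner_sub_right, real_inner_self_eq_norm_sq]
  nlinarith [norm_sub_sq_real x (∑ j, p j • v j), sq_nonneg ‖x - ∑ j, p j • v j‖]

theorem norm_sum_smul_le_of_mem_stdSimplex {a : ι → ℝ} (ha : a ∈ stdSimplex ℝ ι) {v : ι → E}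
    {C : ℝ} (hv : ∀ j, ‖v j‖ ≤ C) : ‖∑ j, a j • v j‖ ≤ C := by
  simpa using (convex_closedBall (0 : E) C).sum_mem (fun j _ ↦ ha.1 j) ha.2
    fun j _ ↦ mem_closedBall_zero_iff.2 (hv j)

theorem abs_two_inner_sum_smul_le {a : ι → ℝ} (ha : a ∈ stdSimplex ℝ ι) {v : ι → E} {C : ℝ}
    (hv : ∀ j, ‖v j‖ ≤ C) (i : ι) : |2 * ⟪∑ j, a j • v j, v i⟫_ℝ| ≤ 2 * C ^ 2 := by
  have hC : 0 ≤ C := (norm_nonneg _).trans (hv i)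
  rw [abs_mul, abs_two, sq]
  gcongr
  exact (abs_real_inner_le_norm _ _).trans
    (mul_le_mul (norm_sum_smul_le_of_mem_stdSimplex ha hv) (hv i) (norm_nonneg _) hC)

theorem sum_smul_sub_eq_sub_sum_smul {a : ι → ℝ} (ha : ∑ j, a j = 1) (x : E) (y : ι → E) :
    ∑ j, a j • (x - y j) = x - ∑ j, a j • y j := by
  simp [smul_sub, sum_sub_distrib, ← sum_smul, ha]

end LinearCombination

section Gradient

variable {F : Type*} [NormedAddCommGroup F] [InnerProductSpace ℝ F] [CompleteSpace F]

theorem gradient_const_mul_sum {ι : Type*} (s : Finset ι) {f : ι → F → ℝ} {x : F}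
    (hf : ∀ i ∈ s, DifferentiableAt ℝ (f i) x) (c : ℝ) :
    gradient (fun y ↦ c * ∑ i ∈ s, f i y) x = c • ∑ i ∈ s, gradient (f i) x := by
  refine HasGradientAt.gradient (hasGradientAt_iff_hasFDerivAt.2 ?_)
  rw [map_smul, map_sum]
  exact (HasFDerivAt.fun_sum fun i hi ↦ (hf i hi).hasGradientAt.hasFDerivAt).const_mul c

theorem gradient_one_div_mul_sum_range {r : ℤ → F → ℝ} (hr : ∀ t, Differentiable ℝ (r t))
    {w : ℕ} (hw : 1 ≤ w) (t : ℤ) (x : F) :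
    gradient (fun y ↦ 1 / (w : ℝ) * ∑ i ∈ range w, r (t - i) y) x
      = (1 / (w : ℝ)) • (gradient (r t) x + ∑ i ∈ Icc 1 (w - 1), gradient (r (t - i)) x) := by
  rw [gradient_const_mul_sum _ fun i _ ↦ hr _ _, sum_range_eq_add_Ico _ (by omega),
    ← Icc_sub_one_right_eq_Ico_of_not_isMin (by simp; omega), Nat.cast_zero, sub_zero]

end Gradient

theorem norm_sq_smul_add_le {E : Type*} [NormedAddCommGroup E] [InnerProductSpace ℝ E]
    {ι : Type*} [Fintype ι] {w δ Q : ℝ} {g S : E} {y : ι → E} {a p : ι → ℝ}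
    (ha : ∑ j, a j = 1) (hp : ∑ j, p j = 1)
    (hδ : ‖(1 / w) • (∑ j, a j • y j + S)‖ ≤ δ) (hQ : ‖g - ∑ j, p j • y j‖ ^ 2 ≤ Q) :
    ‖(1 / w) • (g + S)‖ ^ 2 ≤ 2 * δ ^ 2 + 2 / w ^ 2 *
      (Q + ∑ j, (a j - p j) * (2 * ⟪∑ k, a k • (g - y k), g - y j⟫_ℝ)) := by
  set R := ∑ j, (a j - p j) * (2 * ⟪∑ k, a k • (g - y k), g - y j⟫_ℝ)
  set D := g - ∑ j, a j • y j
  have hsplit : (1 / w) • (g + S) = (1 / w) • (∑ j, a j • y j + S) + (1 / w) • D := by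
    rw [← smul_add]; congr 1; simp only [D]; abel
  have hD : ‖D‖ ^ 2 ≤ Q + R := by
    rw [← sum_smul_sub_eq_sub_sum_smul hp] at hQ
    rw [show D = ∑ j, a j • (g - y j) from (sum_smul_sub_eq_sub_sum_smul ha _ _).symm]
    linarith [norm_sq_sum_smul_sub_norm_sq_sum_smul_le (fun j ↦ g - y j) a p]
  rw [hsplit]
  calc _ ≤ 2 * (‖(1 / w) • (∑ j, a j • y j + S)‖ ^ 2 + ‖(1 / w) • D‖ ^ 2) :=
        (pow_le_pow_left₀ (norm_nonneg _) (norm_add_le _ _) 2).trans add_sq_le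
    _ = 2 * (‖(1 / w) • (∑ j, a j • y j + S)‖ ^ 2 + 1 / w ^ 2 * ‖D‖ ^ 2) := by
        rw [norm_smul (1 / w) D, mul_pow, norm_div, norm_one, Real.norm_eq_abs, div_pow, sq_abs,
          one_pow]
    _ ≤ 2 * (δ ^ 2 + 1 / w ^ 2 * (Q + R)) := by gcongr
    _ = _ := by ring

theorem one_div_mul_sum_le_of_le {T : ℕ} (hT : 0 < T) {x Q R : ℕ → ℝ} {c K B : ℝ} (hK : 0 ≤ K)
    (hx : ∀ t ∈ Icc 1 T, x t ≤ c + K * (Q t + R t)) (hR : ∑ t ∈ Icc 1 T, R t ≤ B) :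
    1 / (T : ℝ) * ∑ t ∈ Icc 1 T, x t ≤ c + K / T * (∑ t ∈ Icc 1 T, Q t + B) := by
  have hT' : (0 : ℝ) < T := by exact_mod_cast hT
  have hsum : ∑ t ∈ Icc 1 T, x t ≤ T * c + K * (∑ t ∈ Icc 1 T, Q t + B) := by
    calc ∑ t ∈ Icc 1 T, x t ≤ ∑ t ∈ Icc 1 T, (c + K * (Q t + R t)) := sum_le_sum hx
      _ = T * c + K * (∑ t ∈ Icc 1 T, Q t + ∑ t ∈ Icc 1 T, R t) := by
        rw [sum_add_distrib, ← mul_sum, ← sum_add_distrib]; simp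
      _ ≤ T * c + K * (∑ t ∈ Icc 1 T, Q t + B) := by gcongr
  calc 1 / (T : ℝ) * ∑ t ∈ Icc 1 T, x t ≤ 1 / T * (T * c + K * (∑ t ∈ Icc 1 T, Q t + B)) := by
        gcongr
    _ = _ := by field_simp

theorem div_add_mul_eq_of_eq_mul_sqrt {L T M c η : ℝ} (hL : 0 < L) (hT : 0 < T) (hM : 0 < M)
    (hc : 0 < c) (hη : η = c * √(L / (T * M ^ 4))) :
    L / η + T * (η * (16 * M ^ 2) ^ 2 / 8) = (1 / c + 32 * c) * M ^ 2 * √(T * L) := by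
  set R := √(T * L)
  have hR2 : R ^ 2 = T * L := sq_sqrt (by positivity)
  have hR : 0 < R := sqrt_pos.2 (by positivity)
  have hsqrt : √(L / (T * M ^ 4)) = R / (T * M ^ 2) := by
    rw [show L / (T * M ^ 4) = (R / (T * M ^ 2)) ^ 2 by rw [div_pow, hR2]; field_simp]
    exact sqrt_sq (by positivity)
  rw [hη, hsqrt]
  field_simp
  linear_combination (-8) * hR2

theorem future_gradient_descent_regret_general
    {E : Type*} [NormedAddCommGroup E] [InnerProductSpace ℝ E] [CompleteSpace E]
    (r : ℤ → E → ℝ) (hrdiff : ∀ t : ℤ, Differentiable ℝ (r t))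
    (M : ℝ) (hM : 0 < M)
    (hgrad : ∀ (t : ℤ) (x : E), ‖gradient (r t) x‖ ≤ M)
    (b w T : ℕ) (hb : 2 ≤ b) (hw : 1 ≤ w) (hT : 1 ≤ T)
    (δ : ℝ) (c : ℝ) (hc : 0 < c)
    (η : ℝ) (hη : η = c * Real.sqrt (Real.log b / (T * M ^ 4)))
    -- the linear gradient generator, its smoothed version, and the smoothed loss
    (m : (Fin b → ℝ) → ℕ → E → E)
    (hm : ∀ (a : Fin b → ℝ) (t : ℕ) (x : E),
      m a t x = ∑ i : Fin b, a i • gradient (r ((t : ℤ) - ((i : ℕ) + 1))) x)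
    (mbar : (Fin b → ℝ) → ℕ → E → E)
    (hmbar : ∀ (a : Fin b → ℝ) (t : ℕ) (x : E),
      mbar a t x = (1 / (w : ℝ)) •
        (m a t x + ∑ i ∈ Finset.Icc 1 (w - 1), gradient (r ((t : ℤ) - i)) x))
    (u : ℕ → E → ℝ)
    (hu : ∀ (t : ℕ) (x : E),
      u t x = (1 / (w : ℝ)) * ∑ i ∈ Finset.range w, r ((t : ℤ) - i) x)
    -- the recommendation-model iterates and the squared forecast error functions
    (θ : ℕ → E)
    (h : ℕ → (Fin b → ℝ) → ℝ)
    (hh : ∀ (t : ℕ) (a : Fin b → ℝ),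
      h t a = ‖∑ j : Fin b,
        a j • (gradient (r t) (θ t)
                - gradient (r ((t : ℤ) - ((j : ℕ) + 1))) (θ t))‖ ^ 2)
    -- exponentiated-gradient updates of the mixture weights
    (φ : ℕ → Fin b → ℝ)
    (hinit : ∀ i, φ 1 i = 1 / (b : ℝ))
    (hstep : ∀ t ∈ Finset.Icc 1 T, ∀ i : Fin b,
      φ (t + 1) i
        = φ t i * Real.exp (-η * fderiv ℝ (h t) (φ t) (Pi.single i 1))
            / ∑ j, φ t j * Real.exp (-η * fderiv ℝ (h t) (φ t) (Pi.single j 1)))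
    -- termination condition of the inner gradient-descent loop
    (hterm : ∀ t ∈ Finset.Icc 1 T, ‖mbar (φ t) t (θ t)‖ ≤ δ)
    -- the comparator: a fixed mixture with forecast error bounded by Q
    (φstar : Fin b → ℝ) (hφstar_nonneg : ∀ i, 0 ≤ φstar i)
    (hφstar_sum : (∑ i, φstar i) = 1)
    (Q : ℕ → ℝ)
    (hQ : ∀ t ∈ Finset.Icc 1 T, ∀ x : E,
      ‖gradient (r t) x - m φstar t x‖ ^ 2 ≤ Q t) :
    (1 / (T : ℝ)) * ∑ t ∈ Finset.Icc 1 T, ‖gradient (u t) (θ t)‖ ^ 2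
      ≤ 2 * δ ^ 2
        + (2 / ((w : ℝ) ^ 2 * T)) *
            ((∑ t ∈ Finset.Icc 1 T, Q t)
              + (1 / c + 32 * c) * M ^ 2 * Real.sqrt (T * Real.log b)) := by
  have : NeZero b := ⟨by omega⟩
  have hT_pos : (0 : ℝ) < T := by exact_mod_cast hT
  have hlog_b : 0 < log b := log_pos (by exact_mod_cast hb)
  have hη_pos : 0 < η := by rw [hη]; positivity
  set v : ℕ → Fin b → E := fun t j ↦
    gradient (r t) (θ t) - gradient (r ((t : ℤ) - ((j : ℕ) + 1))) (θ t)
  set ℓ : ℕ → Fin b → ℝ := fun t i ↦ 2 * ⟪∑ j, φ t j • v t j, v t i⟫_ℝ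
  have hEG : IsExpWeights η ℓ T φ := by
    intro t ht i
    simp only [hstep t ht i, show h t = _ from funext (hh t),
      fderiv_norm_sq_sum_smul_apply_single, ℓ, v]
  have hinit' : ∀ i, φ 1 i = (Fintype.card (Fin b) : ℝ)⁻¹ := by simpa using hinit
  have hφ_mem : ∀ t ∈ Icc 1 T, φ t ∈ stdSimplex ℝ (Fin b) := fun t ht ↦
    hEG.mem_stdSimplex (funext hinit' ▸ (stdSimplex.barycenter (𝕜 := ℝ)).2) t (by grind)
  have hℓ (t : ℕ) (ht : t ∈ Icc 1 T) (i : Fin b) :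
      ℓ t i ∈ Set.Icc (-(2 * (M + M) ^ 2)) (2 * (M + M) ^ 2) :=
    abs_le.1 <| abs_two_inner_sum_smul_le (hφ_mem t ht)
      (fun j ↦ norm_sub_le_of_le (hgrad _ _) (hgrad _ _)) i
  have hregret := hEG.regret_le hη_pos hinit' hℓ ⟨hφstar_nonneg, hφstar_sum⟩
  rw [Fintype.card_fin, show 2 * (M + M) ^ 2 - -(2 * (M + M) ^ 2) = 16 * M ^ 2 by ring,
    div_add_mul_eq_of_eq_mul_sqrt hlog_b hT_pos hM hc hη] at hregret
  have hround (t : ℕ) (ht : t ∈ Icc 1 T) : ‖gradient (u t) (θ t)‖ ^ 2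
      ≤ 2 * δ ^ 2 + 2 / (w : ℝ) ^ 2 * (Q t + ∑ i, (φ t i - φstar i) * ℓ t i) := by
    rw [show u t = _ from funext (hu t), gradient_one_div_mul_sum_range hrdiff hw]
    exact norm_sq_smul_add_le (hφ_mem t ht).2 hφstar_sum (by simpa [hmbar, hm] using hterm t ht)
      (by simpa [hm] using hQ t ht (θ t))
  have := one_div_mul_sum_le_of_le hT (by positivity) hround hregret
  rwa [div_div] at this

/-- **Theorem 2** (with explicit constants): Future Gradient Descent with
exponentiated-gradient meta updates of the mixture weights of the linear gradient
generator `m(θ; a, t) = ∑_{i=1}^b a_i ∇r_{t−i}(θ)` achieves average `w`-local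
regret at most `2δ² + (2/(w²T))·(∑ Q_t + (1/c + 32c)·M²·√(T log b))`, i.e. the
regret of the best fixed linear gradient generator up to an `O(M²√(log b / T))`
excess per round. -/
theorem future_gradient_descent_regret
    {E : Type*} [NormedAddCommGroup E] [InnerProductSpace ℝ E] [CompleteSpace E]
    (r : ℤ → E → ℝ) (hrdiff : ∀ t : ℤ, Differentiable ℝ (r t))
    (hr0 : ∀ s : ℤ, s ≤ 0 → r s = 0)
    (M : ℝ) (hM : 0 < M)
    (hgrad : ∀ (t : ℤ) (x : E), ‖gradient (r t) x‖ ≤ M)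
    (b w T : ℕ) (hb : 2 ≤ b) (hw : 1 ≤ w) (hT : 1 ≤ T)
    (δ : ℝ) (hδ : 0 ≤ δ) (c : ℝ) (hc : 0 < c)
    (η : ℝ) (hη : η = c * Real.sqrt (Real.log b / (T * M ^ 4)))
    -- the linear gradient generator, its smoothed version, and the smoothed loss
    (m : (Fin b → ℝ) → ℕ → E → E)
    (hm : ∀ (a : Fin b → ℝ) (t : ℕ) (x : E),
      m a t x = ∑ i : Fin b, a i • gradient (r ((t : ℤ) - ((i : ℕ) + 1))) x)
    (mbar : (Fin b → ℝ) → ℕ → E → E)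
    (hmbar : ∀ (a : Fin b → ℝ) (t : ℕ) (x : E),
      mbar a t x = (1 / (w : ℝ)) •
        (m a t x + ∑ i ∈ Finset.Icc 1 (w - 1), gradient (r ((t : ℤ) - i)) x))
    (u : ℕ → E → ℝ)
    (hu : ∀ (t : ℕ) (x : E),
      u t x = (1 / (w : ℝ)) * ∑ i ∈ Finset.range w, r ((t : ℤ) - i) x)
    -- the recommendation-model iterates and the squared forecast error functions
    (θ : ℕ → E)
    (h : ℕ → (Fin b → ℝ) → ℝ)
    (hh : ∀ (t : ℕ) (a : Fin b → ℝ),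
      h t a = ‖∑ j : Fin b,
        a j • (gradient (r t) (θ t)
                - gradient (r ((t : ℤ) - ((j : ℕ) + 1))) (θ t))‖ ^ 2)
    -- exponentiated-gradient updates of the mixture weights
    (φ : ℕ → Fin b → ℝ)
    (hinit : ∀ i, φ 1 i = 1 / (b : ℝ))
    (hstep : ∀ t ∈ Finset.Icc 1 T, ∀ i : Fin b,
      φ (t + 1) i
        = φ t i * Real.exp (-η * fderiv ℝ (h t) (φ t) (Pi.single i 1))
            / ∑ j, φ t j * Real.exp (-η * fderiv ℝ (h t) (φ t) (Pi.single j 1)))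
    -- termination condition of the inner gradient-descent loop
    (hterm : ∀ t ∈ Finset.Icc 1 T, ‖mbar (φ t) t (θ t)‖ ≤ δ)
    -- the comparator: a fixed mixture with forecast error bounded by Q
    (φstar : Fin b → ℝ) (hφstar_nonneg : ∀ i, 0 ≤ φstar i)
    (hφstar_sum : (∑ i, φstar i) = 1)
    (Q : ℕ → ℝ)
    (hQnonneg : ∀ t ∈ Finset.Icc 1 T, 0 ≤ Q t)
    (hQ : ∀ t ∈ Finset.Icc 1 T, ∀ x : E,
      ‖gradient (r t) x - m φstar t x‖ ^ 2 ≤ Q t) :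
    (1 / (T : ℝ)) * ∑ t ∈ Finset.Icc 1 T, ‖gradient (u t) (θ t)‖ ^ 2
      ≤ 2 * δ ^ 2
        + (2 / ((w : ℝ) ^ 2 * T)) *
            ((∑ t ∈ Finset.Icc 1 T, Q t)
              + (1 / c + 32 * c) * M ^ 2 * Real.sqrt (T * Real.log b)) :=
  future_gradient_descent_regret_general r hrdiff M hM hgrad b w T hb hw hT δ c hc η hη m hm mbar
    hmbar u hu θ h hh φ hinit hstep hterm φstar hφstar_nonneg hφstar_sum Q hQ
end
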